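/- Let D be a double Gerstenhaber algebra of degree d. Then the associated bracket {α,β} = m({{α,β}}) induces on the quotient (D/[D,D])[d] (degree shift by d) a graded Lie algebra structure: the induced bracket is well-defined on the quotient by graded commutators, is graded antisymmetric, and satisfies the graded Jacobi identity. -/

import Mathlib

/-!
In `D/[D,D]` homogeneous factors of a product may be cyclically permuted at the cost of the
Koszul sign, so modulo `[D,D]` multiplication absorbs the graded flip `σ` and the cyclic
permutation of three factors; as homogeneous pure tensors span, it suffices to check such
identities on them. The Leibniz rule makes every `{α, -}` a homogeneous graded derivation, which
preserves `[D,D]`; double antisymmetry gives antisymmetry of `{-,-}` modulo `[D,D]`, and with it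
well-definedness in the first argument. For Jacobi, multiply out the double Jacobi identity for
`(α, β, γ)` and for `(α, γ, β)`: modulo `[D,D]` one has
`m₃ {{α, w}}_L ≡ {α, m w} - m₃ {{α, σ w}}_L`, and a signed combination of the two identities is
the cyclic Jacobi identity for `{-,-}`.
-/

open TensorProduct

variable (k : Type*) [Field k] [CharZero k]
  (D : Type*) [Ring D] [Algebra k D]
  (𝒜 : ℤ → Submodule k D) [GradedAlgebra 𝒜] (d : ℤ)

/-- `{{α, x ⊗ y}}_L = {{α,x}} ⊗ y`, reassociated into `D ⊗ (D ⊗ D)`. -/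
noncomputable def brL (bb : D →ₗ[k] D →ₗ[k] D ⊗[k] D) (α : D) :
    D ⊗[k] D →ₗ[k] D ⊗[k] (D ⊗[k] D) :=
  (TensorProduct.assoc k D D D).toLinearMap ∘ₗ LinearMap.rTensor D (bb α)

/-- the span of graded commutators `[D,D]`. -/
def gradedComm : Submodule k D :=
  Submodule.span k {x : D | ∃ (i j : ℤ) (u v : D), u ∈ 𝒜 i ∧ v ∈ 𝒜 j ∧
    x = u * v - ((-1 : k) ^ (i * j).natAbs) • (v * u)}

section Sign
variable {R : Type*} [Ring R]

lemma neg_one_pow_natAbs_add (a b : ℤ) :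
    (-1 : R) ^ (a + b).natAbs = (-1 : R) ^ a.natAbs * (-1 : R) ^ b.natAbs := by
  simp only [← Int.coe_negOnePow, Int.negOnePow_add, Units.val_mul, Int.cast_mul]

lemma neg_one_pow_natAbs_congr {a b : ℤ} (h : Even (a - b)) :
    (-1 : R) ^ a.natAbs = (-1 : R) ^ b.natAbs := by
  rw [← Int.coe_negOnePow, ← Int.coe_negOnePow, (Int.negOnePow_eq_iff a b).2 h]

lemma neg_one_pow_natAbs_mul_eq {a b c : ℤ} (h : Even (a + b - c)) :
    (-1 : R) ^ a.natAbs * (-1 : R) ^ b.natAbs = (-1 : R) ^ c.natAbs := by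
  rw [← neg_one_pow_natAbs_add, neg_one_pow_natAbs_congr h]

end Sign

section Homogeneous
variable {ι k M N P Q : Type*} [DecidableEq ι] [CommSemiring k]
  [AddCommMonoid M] [Module k M] [AddCommMonoid N] [Module k N]
  [AddCommMonoid P] [Module k P] [AddCommMonoid Q] [Module k Q]
  {𝒜 : ι → Submodule k M} [DirectSum.Decomposition 𝒜]
  {ℬ : ι → Submodule k N} [DirectSum.Decomposition ℬ]
  {𝒞 : ι → Submodule k P} [DirectSum.Decomposition 𝒞]

lemma LinearMap.ext_of_homogeneous {f g : M →ₗ[k] Q} (h : ∀ i, ∀ x ∈ 𝒜 i, f x = g x) :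
    f = g :=
  LinearMap.ext fun x => DirectSum.Decomposition.inductionOn 𝒜 (motive := fun x => f x = g x)
    (by simp) (fun m => h _ _ m.2) (fun _ _ hx hy => by rw [map_add, map_add, hx, hy]) x

lemma TensorProduct.ext_of_homogeneous {f g : M ⊗[k] N →ₗ[k] Q}
    (h : ∀ i j, ∀ x ∈ 𝒜 i, ∀ y ∈ ℬ j, f (x ⊗ₜ y) = g (x ⊗ₜ y)) : f = g :=
  TensorProduct.ext <| LinearMap.ext_of_homogeneous (𝒜 := 𝒜) fun i x hx =>
    LinearMap.ext_of_homogeneous (𝒜 := ℬ) fun j y hy => h i j x hx y hy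

lemma TensorProduct.ext_threefold_of_homogeneous {f g : M ⊗[k] (N ⊗[k] P) →ₗ[k] Q}
    (h : ∀ i j l, ∀ x ∈ 𝒜 i, ∀ y ∈ ℬ j, ∀ z ∈ 𝒞 l,
      f (x ⊗ₜ (y ⊗ₜ z)) = g (x ⊗ₜ (y ⊗ₜ z))) : f = g :=
  TensorProduct.ext <| LinearMap.ext_of_homogeneous (𝒜 := 𝒜) fun i x hx =>
    TensorProduct.ext_of_homogeneous (𝒜 := ℬ) (ℬ := 𝒞) fun j l y hy z hz =>
      h i j l x hx y hy z hz

end Homogeneous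

section Multiplication
variable {k A : Type*} [CommSemiring k] [Semiring A] [Algebra k A]

lemma LinearMap.mul'_rTensor_mulLeft (a : A) (w : A ⊗[k] A) :
    mul' k A (rTensor A (mulLeft k a) w) = a * mul' k A w := by
  induction w using TensorProduct.induction_on with
  | zero => simp
  | tmul u v => simp [mul_assoc]
  | add x y hx hy => simp [mul_add, hx, hy]

lemma LinearMap.mul'_lTensor_mulRight (a : A) (w : A ⊗[k] A) :
    mul' k A (lTensor A (mulRight k a) w) = mul' k A w * a := by
  induction w using TensorProduct.induction_on with
  | zero => simp
  | tmul u v => simp [mul_assoc]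
  | add x y hx hy => simp [add_mul, hx, hy]

noncomputable def mul₃ : A ⊗[k] (A ⊗[k] A) →ₗ[k] A :=
  LinearMap.mul' k A ∘ₗ LinearMap.lTensor A (LinearMap.mul' k A)

@[simp]
lemma mul₃_tmul (x y z : A) : mul₃ (k := k) (x ⊗ₜ[k] (y ⊗ₜ[k] z)) = x * (y * z) := by
  simp [mul₃]

lemma mul₃_assoc_tmul (ω : A ⊗[k] A) (z : A) :
    mul₃ (TensorProduct.assoc k A A A (ω ⊗ₜ[k] z)) = LinearMap.mul' k A ω * z := by
  induction ω using TensorProduct.induction_on with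
  | zero => simp
  | tmul x y => simp [mul_assoc]
  | add x y hx hy => simp only [add_tmul, map_add, hx, hy, add_mul]

end Multiplication

section DoubleBracket
variable {k : Type*} [Field k] {D : Type*} [Ring D] [Algebra k D] (𝒜 : ℤ → Submodule k D)

def IsGradedFlip (σ : D ⊗[k] D →ₗ[k] D ⊗[k] D) : Prop :=
  ∀ (i j : ℤ) (x y : D), x ∈ 𝒜 i → y ∈ 𝒜 j →
    σ (x ⊗ₜ[k] y) = ((-1 : k) ^ (i * j).natAbs) • (y ⊗ₜ[k] x)

def IsGradedCycle (cyc : D ⊗[k] (D ⊗[k] D) →ₗ[k] D ⊗[k] (D ⊗[k] D)) : Prop :=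
  ∀ (i j l : ℤ) (x y z : D), x ∈ 𝒜 i → y ∈ 𝒜 j → z ∈ 𝒜 l →
    cyc (x ⊗ₜ[k] (y ⊗ₜ[k] z)) = ((-1 : k) ^ ((i + j) * l).natAbs) • (z ⊗ₜ[k] (x ⊗ₜ[k] y))

def IsGradedDerivation (e : ℤ) (f : D →ₗ[k] D) : Prop :=
  ∀ (j : ℤ) (β : D), β ∈ 𝒜 j → ∀ γ : D,
    f (β * γ) = ((-1 : k) ^ (e * j).natAbs) • (β * f γ) + f β * γ

def IsGradedOfDegree (d : ℤ) (B : D →ₗ[k] D →ₗ[k] D) : Prop :=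
  ∀ (i j : ℤ) (α β : D), α ∈ 𝒜 i → β ∈ 𝒜 j → B α β ∈ 𝒜 (i + j + d)

def IsGradedAntisymm (d : ℤ) (σ : D ⊗[k] D →ₗ[k] D ⊗[k] D) (bb : D →ₗ[k] D →ₗ[k] D ⊗[k] D) :
    Prop :=
  ∀ (i j : ℤ) (α β : D), α ∈ 𝒜 i → β ∈ 𝒜 j →
    bb α β = - ((-1 : k) ^ ((i + d) * (j + d)).natAbs) • σ (bb β α)

def IsGradedDoubleJacobi (d : ℤ) (cyc : D ⊗[k] (D ⊗[k] D) →ₗ[k] D ⊗[k] (D ⊗[k] D))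
    (bb : D →ₗ[k] D →ₗ[k] D ⊗[k] D) : Prop :=
  ∀ (i j l : ℤ) (α β γ : D), α ∈ 𝒜 i → β ∈ 𝒜 j → γ ∈ 𝒜 l →
    brL k D bb α (bb β γ)
      + ((-1 : k) ^ ((i + d) * (j + l)).natAbs) • cyc (brL k D bb β (bb γ α))
      + ((-1 : k) ^ ((l + d) * (i + j)).natAbs) • cyc (cyc (brL k D bb γ (bb α β))) = 0

variable {𝒜}

noncomputable def assocBracket (bb : D →ₗ[k] D →ₗ[k] D ⊗[k] D) : D →ₗ[k] D →ₗ[k] D :=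
  bb.compr₂ (LinearMap.mul' k D)

@[simp]
lemma assocBracket_apply (bb : D →ₗ[k] D →ₗ[k] D ⊗[k] D) (α β : D) :
    assocBracket bb α β = LinearMap.mul' k D (bb α β) := rfl

lemma mul'_mem_of_mem_span_homogeneous [SetLike.GradedMonoid 𝒜] {n : ℤ} {w : D ⊗[k] D}
    (hw : w ∈ Submodule.span k {w : D ⊗[k] D | ∃ p q : ℤ, p + q = n ∧
      ∃ u ∈ 𝒜 p, ∃ v ∈ 𝒜 q, w = u ⊗ₜ[k] v}) :
    LinearMap.mul' k D w ∈ 𝒜 n := by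
  refine Submodule.span_le (p := (𝒜 n).comap (LinearMap.mul' k D)) |>.2 ?_ hw
  rintro _ ⟨p, q, rfl, u, hu, v, hv, rfl⟩
  exact SetLike.mul_mem_graded hu hv

lemma isGradedDerivation_assocBracket {d : ℤ} {bb : D →ₗ[k] D →ₗ[k] D ⊗[k] D}
    (hleib : ∀ (i j : ℤ) (α β : D), α ∈ 𝒜 i → β ∈ 𝒜 j → ∀ γ : D,
      bb α (β * γ) =
        ((-1 : k) ^ ((i + d) * j).natAbs) •
            LinearMap.rTensor D (LinearMap.mulLeft k β) (bb α γ)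
          + LinearMap.lTensor D (LinearMap.mulRight k γ) (bb α β))
    {i : ℤ} {α : D} (hα : α ∈ 𝒜 i) :
    IsGradedDerivation 𝒜 (i + d) (assocBracket bb α) := by
  intro j β hβ γ
  simp only [assocBracket_apply, hleib i j α β hα hβ γ, map_add, map_smul,
    LinearMap.mul'_rTensor_mulLeft, LinearMap.mul'_lTensor_mulRight]

local notation "τ" => Submodule.mkQ (gradedComm k D 𝒜)

lemma mkQ_mul_comm_of_mem {i j : ℤ} {u v : D} (hu : u ∈ 𝒜 i) (hv : v ∈ 𝒜 j) :
    τ (u * v) = ((-1 : k) ^ (i * j).natAbs) • τ (v * u) := by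
  rw [← map_smul]
  exact (Submodule.Quotient.eq _).2 (Submodule.subset_span ⟨i, j, u, v, hu, hv, rfl⟩)

lemma IsGradedDerivation.mkQ_map_mul_comm {e : ℤ} {f : D →ₗ[k] D}
    (hf : IsGradedDerivation 𝒜 e f) (hfe : ∀ j, ∀ β ∈ 𝒜 j, f β ∈ 𝒜 (e + j))
    {i j : ℤ} {u v : D} (hu : u ∈ 𝒜 i) (hv : v ∈ 𝒜 j) :
    τ (f (u * v)) = ((-1 : k) ^ (i * j).natAbs) • τ (f (v * u)) := by
  rw [hf i u hu, hf j v hv, map_add, map_add, map_smul, map_smul,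
    mkQ_mul_comm_of_mem hu (hfe j v hv), mkQ_mul_comm_of_mem (hfe i u hu) hv, smul_add,
    smul_smul, smul_smul]
  have h₁ : (-1 : k) ^ (e * i).natAbs * (-1) ^ (i * (e + j)).natAbs = (-1) ^ (i * j).natAbs :=
    neg_one_pow_natAbs_mul_eq ⟨e * i, by ring⟩
  have h₂ : (-1 : k) ^ (i * j).natAbs * (-1) ^ (e * j).natAbs = (-1) ^ ((e + i) * j).natAbs :=
    neg_one_pow_natAbs_mul_eq ⟨0, by ring⟩
  rw [h₁, h₂, add_comm]

lemma IsGradedDerivation.map_mem_gradedComm {e : ℤ} {f : D →ₗ[k] D}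
    (hf : IsGradedDerivation 𝒜 e f) (hfe : ∀ j, ∀ β ∈ 𝒜 j, f β ∈ 𝒜 (e + j))
    {x : D} (hx : x ∈ gradedComm k D 𝒜) : f x ∈ gradedComm k D 𝒜 := by
  induction hx using Submodule.span_induction with
  | mem x hx =>
    obtain ⟨i, j, u, v, hu, hv, rfl⟩ := hx
    rw [← Submodule.Quotient.mk_eq_zero, ← Submodule.mkQ_apply, map_sub, map_smul, map_sub,
      map_smul, hf.mkQ_map_mul_comm hfe hu hv, sub_self]
  | zero => simp
  | add x y _ _ hx hy => rw [map_add]; exact add_mem hx hy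
  | smul a x _ hx => rw [map_smul]; exact Submodule.smul_mem _ a hx

variable [GradedAlgebra 𝒜] {d : ℤ} {σ : D ⊗[k] D →ₗ[k] D ⊗[k] D} {bb : D →ₗ[k] D →ₗ[k] D ⊗[k] D}
  {cyc : D ⊗[k] (D ⊗[k] D) →ₗ[k] D ⊗[k] (D ⊗[k] D)}

lemma IsGradedFlip.involutive (hσ : IsGradedFlip 𝒜 σ) : Function.Involutive σ := by
  intro w
  refine LinearMap.congr_fun (TensorProduct.ext_of_homogeneous (f := σ ∘ₗ σ) (g := .id)
    (𝒜 := 𝒜) (ℬ := 𝒜) fun i j x hx y hy => ?_) w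
  rw [LinearMap.comp_apply, hσ i j x y hx hy, map_smul, hσ j i y x hy hx, smul_smul,
    mul_comm j i, ← pow_add, Even.neg_one_pow ⟨_, rfl⟩, one_smul, LinearMap.id_apply]

lemma IsGradedFlip.mkQ_mul'_apply (hσ : IsGradedFlip 𝒜 σ) (w : D ⊗[k] D) :
    τ (LinearMap.mul' k D (σ w)) = τ (LinearMap.mul' k D w) := by
  refine LinearMap.congr_fun (TensorProduct.ext_of_homogeneous
    (f := τ ∘ₗ LinearMap.mul' k D ∘ₗ σ) (g := τ ∘ₗ LinearMap.mul' k D)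
    (𝒜 := 𝒜) (ℬ := 𝒜) fun i j x hx y hy => ?_) w
  simp only [LinearMap.comp_apply, hσ i j x y hx hy, map_smul, LinearMap.mul'_apply]
  rw [mkQ_mul_comm_of_mem hy hx, smul_smul, mul_comm j i, ← pow_add,
    Even.neg_one_pow ⟨_, rfl⟩, one_smul]

lemma IsGradedCycle.mkQ_mul₃_apply (hcyc : IsGradedCycle 𝒜 cyc) (w : D ⊗[k] (D ⊗[k] D)) :
    τ (mul₃ (cyc w)) = τ (mul₃ w) := by
  refine LinearMap.congr_fun (TensorProduct.ext_threefold_of_homogeneous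
    (f := τ ∘ₗ mul₃ ∘ₗ cyc) (g := τ ∘ₗ mul₃)
    (𝒜 := 𝒜) (ℬ := 𝒜) (𝒞 := 𝒜) fun i j l x hx y hy z hz => ?_) w
  simp only [LinearMap.comp_apply, hcyc i j l x y z hx hy hz, map_smul, mul₃_tmul]
  rw [mkQ_mul_comm_of_mem hz (SetLike.mul_mem_graded hx hy), smul_smul, mul_assoc, mul_comm l,
    ← pow_add, Even.neg_one_pow ⟨_, rfl⟩, one_smul]

lemma mkQ_assocBracket_antisymm (hσ : IsGradedFlip 𝒜 σ) (hskew : IsGradedAntisymm 𝒜 d σ bb)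
    {i j : ℤ} {α β : D} (hα : α ∈ 𝒜 i) (hβ : β ∈ 𝒜 j) :
    τ (assocBracket bb α β) =
      -((-1 : k) ^ ((i + d) * (j + d)).natAbs) • τ (assocBracket bb β α) := by
  simp only [assocBracket_apply]
  rw [hskew i j α β hα hβ, map_smul, map_smul, hσ.mkQ_mul'_apply]

lemma assocBracket_mem_gradedComm_right
    (hder : ∀ i, ∀ α ∈ 𝒜 i, IsGradedDerivation 𝒜 (i + d) (assocBracket bb α))
    (hdeg : IsGradedOfDegree 𝒜 d (assocBracket bb))
    {x : D} (hx : x ∈ gradedComm k D 𝒜) (γ : D) : assocBracket bb γ x ∈ gradedComm k D 𝒜 := by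
  induction γ using DirectSum.Decomposition.inductionOn 𝒜 with
  | zero => simp
  | homogeneous γ =>
    refine (hder _ γ γ.2).map_mem_gradedComm (fun j β hβ => ?_) hx
    rw [← add_right_comm]
    exact hdeg _ _ _ _ γ.2 hβ
  | add γ γ' hγ hγ' => rw [map_add, LinearMap.add_apply]; exact add_mem hγ hγ'

lemma assocBracket_mem_gradedComm_left (hσ : IsGradedFlip 𝒜 σ)
    (hskew : IsGradedAntisymm 𝒜 d σ bb)
    (hder : ∀ i, ∀ α ∈ 𝒜 i, IsGradedDerivation 𝒜 (i + d) (assocBracket bb α))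
    (hdeg : IsGradedOfDegree 𝒜 d (assocBracket bb))
    {x : D} (hx : x ∈ gradedComm k D 𝒜) (γ : D) : assocBracket bb x γ ∈ gradedComm k D 𝒜 := by
  induction hx using Submodule.span_induction with
  | mem x hx =>
    obtain ⟨i, j, u, v, hu, hv, rfl⟩ := hx
    have hx : u * v - ((-1 : k) ^ (i * j).natAbs) • (v * u) ∈ 𝒜 (i + j) :=
      sub_mem (SetLike.mul_mem_graded hu hv)
        (Submodule.smul_mem _ _ (add_comm j i ▸ SetLike.mul_mem_graded hv hu))
    induction γ using DirectSum.Decomposition.inductionOn 𝒜 with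
    | zero => simp
    | homogeneous γ =>
      have hγx := assocBracket_mem_gradedComm_right hder hdeg
        (Submodule.subset_span ⟨i, j, u, v, hu, hv, rfl⟩) γ
      rw [← Submodule.Quotient.mk_eq_zero] at hγx ⊢
      rw [← Submodule.mkQ_apply, mkQ_assocBracket_antisymm hσ hskew hx γ.2,
        Submodule.mkQ_apply, hγx, smul_zero]
    | add γ γ' hγ hγ' => rw [map_add]; exact add_mem hγ hγ'
  | zero => simp
  | add x y _ _ hx hy => rw [map_add, LinearMap.add_apply]; exact add_mem hx hy
  | smul a x _ hx => rw [map_smul, LinearMap.smul_apply]; exact Submodule.smul_mem _ a hx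

lemma mul₃_brL_tmul (α x y : D) :
    mul₃ (brL k D bb α (x ⊗ₜ[k] y)) = assocBracket bb α x * y := by
  simp [brL, mul₃_assoc_tmul]

lemma mkQ_mul₃_brL (hσ : IsGradedFlip 𝒜 σ)
    (hder : ∀ i, ∀ α ∈ 𝒜 i, IsGradedDerivation 𝒜 (i + d) (assocBracket bb α))
    (hdeg : IsGradedOfDegree 𝒜 d (assocBracket bb)) {i : ℤ} {α : D} (hα : α ∈ 𝒜 i)
    (w : D ⊗[k] D) :
    τ (mul₃ (brL k D bb α w)) =
      τ (assocBracket bb α (LinearMap.mul' k D w)) - τ (mul₃ (brL k D bb α (σ w))) := by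
  refine LinearMap.congr_fun (TensorProduct.ext_of_homogeneous
    (f := τ ∘ₗ mul₃ ∘ₗ brL k D bb α)
    (g := τ ∘ₗ assocBracket bb α ∘ₗ LinearMap.mul' k D - τ ∘ₗ mul₃ ∘ₗ brL k D bb α ∘ₗ σ)
    (𝒜 := 𝒜) (ℬ := 𝒜) fun p q x hx y hy => ?_) w
  simp only [LinearMap.comp_apply, LinearMap.sub_apply, LinearMap.mul'_apply,
    hσ p q x y hx hy, map_smul, mul₃_brL_tmul, hder i α hα p x hx y, map_add,
    mkQ_mul_comm_of_mem hx (hdeg i q α y hα hy), smul_smul]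
  rw [neg_one_pow_natAbs_mul_eq (c := p * q) ⟨p * (i + d), by ring⟩]
  abel

lemma IsGradedAntisymm.flip_apply (hskew : IsGradedAntisymm 𝒜 d σ bb) (hσ : IsGradedFlip 𝒜 σ)
    {i j : ℤ} {α β : D} (hα : α ∈ 𝒜 i) (hβ : β ∈ 𝒜 j) :
    σ (bb α β) = -((-1 : k) ^ ((i + d) * (j + d)).natAbs) • bb β α := by
  rw [hskew i j α β hα hβ, map_smul, hσ.involutive]

lemma mkQ_mul₃_brL_doubleBracket (hσ : IsGradedFlip 𝒜 σ) (hskew : IsGradedAntisymm 𝒜 d σ bb)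
    (hder : ∀ i, ∀ α ∈ 𝒜 i, IsGradedDerivation 𝒜 (i + d) (assocBracket bb α))
    (hdeg : IsGradedOfDegree 𝒜 d (assocBracket bb)) {i j l : ℤ} {α β γ : D}
    (hα : α ∈ 𝒜 i) (hβ : β ∈ 𝒜 j) (hγ : γ ∈ 𝒜 l) :
    τ (mul₃ (brL k D bb α (bb β γ))) = τ (assocBracket bb α (assocBracket bb β γ)) +
      ((-1 : k) ^ ((j + d) * (l + d)).natAbs) • τ (mul₃ (brL k D bb α (bb γ β))) := by
  rw [mkQ_mul₃_brL hσ hder hdeg hα, hskew.flip_apply hσ hβ hγ, map_smul, map_smul, map_smul,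
    neg_smul, sub_neg_eq_add]
  rfl

lemma mkQ_mul₃_doubleJacobi
    (hcyc : IsGradedCycle 𝒜 cyc)
    (hjac : IsGradedDoubleJacobi 𝒜 d cyc bb)
    {i j l : ℤ} {α β γ : D} (hα : α ∈ 𝒜 i) (hβ : β ∈ 𝒜 j) (hγ : γ ∈ 𝒜 l) :
    τ (mul₃ (brL k D bb α (bb β γ)))
      + ((-1 : k) ^ ((i + d) * (j + l)).natAbs) • τ (mul₃ (brL k D bb β (bb γ α)))
      + ((-1 : k) ^ ((l + d) * (i + j)).natAbs) • τ (mul₃ (brL k D bb γ (bb α β))) = 0 := by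
  have h := congrArg (τ ∘ mul₃) (hjac i j l α β γ hα hβ hγ)
  simpa only [Function.comp_apply, map_add, map_smul, map_zero, hcyc.mkQ_mul₃_apply] using h

lemma mkQ_assocBracket_jacobi_cyclic
    (hσ : IsGradedFlip 𝒜 σ) (hcyc : IsGradedCycle 𝒜 cyc) (hskew : IsGradedAntisymm 𝒜 d σ bb)
    (hder : ∀ i, ∀ α ∈ 𝒜 i, IsGradedDerivation 𝒜 (i + d) (assocBracket bb α))
    (hdeg : IsGradedOfDegree 𝒜 d (assocBracket bb))
    (hjac : IsGradedDoubleJacobi 𝒜 d cyc bb)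
    {i j l : ℤ} {α β γ : D} (hα : α ∈ 𝒜 i) (hβ : β ∈ 𝒜 j) (hγ : γ ∈ 𝒜 l) :
    τ (assocBracket bb α (assocBracket bb β γ))
      + ((-1 : k) ^ ((i + d) * (j + l)).natAbs) • τ (assocBracket bb β (assocBracket bb γ α))
      + ((-1 : k) ^ ((l + d) * (i + j)).natAbs) • τ (assocBracket bb γ (assocBracket bb α β))
      = 0 := by
  have E₁ := mkQ_mul₃_doubleJacobi hcyc hjac hα hβ hγ
  have E₂ := mkQ_mul₃_doubleJacobi hcyc hjac hα hγ hβ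
  have K₁ := mkQ_mul₃_brL_doubleBracket hσ hskew hder hdeg hα hβ hγ
  have K₂ := mkQ_mul₃_brL_doubleBracket hσ hskew hder hdeg hβ hγ hα
  have K₃ := mkQ_mul₃_brL_doubleBracket hσ hskew hder hdeg hγ hα hβ
  have s₁ : ((-1 : k) ^ ((j + d) * (l + d)).natAbs) * (-1) ^ ((i + d) * (l + j)).natAbs =
      (-1) ^ ((l + d) * (i + j)).natAbs * (-1) ^ ((i + d) * (j + d)).natAbs := by
    rw [← neg_one_pow_natAbs_add, ← neg_one_pow_natAbs_add]
    exact neg_one_pow_natAbs_congr ⟨d * (l - i), by ring⟩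
  have s₂ : ((-1 : k) ^ ((j + d) * (l + d)).natAbs) * (-1) ^ ((j + d) * (i + l)).natAbs =
      (-1) ^ ((i + d) * (j + l)).natAbs * (-1) ^ ((l + d) * (i + d)).natAbs := by
    rw [← neg_one_pow_natAbs_add, ← neg_one_pow_natAbs_add]
    exact neg_one_pow_natAbs_congr ⟨l * (j - i), by ring⟩
  linear_combination (norm := module) E₁ - K₁ - ((-1 : k) ^ ((i + d) * (j + l)).natAbs) • K₂
    - ((-1 : k) ^ ((l + d) * (i + j)).natAbs) • K₃
    - ((-1 : k) ^ ((j + d) * (l + d)).natAbs) • E₂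
    + s₁ • τ (mul₃ (brL k D bb γ (bb β α))) + s₂ • τ (mul₃ (brL k D bb β (bb α γ)))

lemma assocBracket_antisymm_mem_gradedComm (hσ : IsGradedFlip 𝒜 σ)
    (hskew : IsGradedAntisymm 𝒜 d σ bb) {i j : ℤ} {α β : D} (hα : α ∈ 𝒜 i) (hβ : β ∈ 𝒜 j) :
    assocBracket bb α β + ((-1 : k) ^ ((i + d) * (j + d)).natAbs) • assocBracket bb β α ∈
      gradedComm k D 𝒜 := by
  rw [← Submodule.Quotient.mk_eq_zero, ← Submodule.mkQ_apply, map_add, map_smul,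
    mkQ_assocBracket_antisymm hσ hskew hα hβ, neg_smul, neg_add_cancel]

lemma assocBracket_jacobi_mem_gradedComm
    (hσ : IsGradedFlip 𝒜 σ) (hcyc : IsGradedCycle 𝒜 cyc) (hskew : IsGradedAntisymm 𝒜 d σ bb)
    (hder : ∀ i, ∀ α ∈ 𝒜 i, IsGradedDerivation 𝒜 (i + d) (assocBracket bb α))
    (hdeg : IsGradedOfDegree 𝒜 d (assocBracket bb))
    (hjac : IsGradedDoubleJacobi 𝒜 d cyc bb)
    {i j l : ℤ} {α β γ : D} (hα : α ∈ 𝒜 i) (hβ : β ∈ 𝒜 j) (hγ : γ ∈ 𝒜 l) :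
    assocBracket bb α (assocBracket bb β γ) - assocBracket bb (assocBracket bb α β) γ
      - ((-1 : k) ^ ((i + d) * (j + d)).natAbs) • assocBracket bb β (assocBracket bb α γ) ∈
      gradedComm k D 𝒜 := by
  have J := mkQ_assocBracket_jacobi_cyclic hσ hcyc hskew hder hdeg hjac hα hβ hγ
  have A₃ := mkQ_assocBracket_antisymm hσ hskew (hdeg i j α β hα hβ) hγ
  have A₂ := assocBracket_mem_gradedComm_right hder hdeg
    (assocBracket_antisymm_mem_gradedComm hσ hskew hα hγ) β
  rw [← Submodule.Quotient.mk_eq_zero, ← Submodule.mkQ_apply, map_add, map_smul, map_add,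
    map_smul] at A₂
  have s₁ : ((-1 : k) ^ ((i + d) * (j + d)).natAbs) * (-1) ^ ((i + d) * (l + d)).natAbs =
      (-1) ^ ((i + d) * (j + l)).natAbs :=
    neg_one_pow_natAbs_mul_eq ⟨d * (i + d), by ring⟩
  have s₂ : ((-1 : k) ^ ((i + j + d + d) * (l + d)).natAbs) =
      (-1) ^ ((l + d) * (i + j)).natAbs :=
    neg_one_pow_natAbs_congr ⟨d * (l + d), by ring⟩
  rw [← Submodule.Quotient.mk_eq_zero, ← Submodule.mkQ_apply, map_sub, map_sub, map_smul]
  linear_combination (norm := module) J - A₃ - ((-1 : k) ^ ((i + d) * (j + d)).natAbs) • A₂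
    + s₁ • τ (assocBracket bb β (assocBracket bb γ α))
    + s₂ • τ (assocBracket bb γ (assocBracket bb α β))

end DoubleBracket

/-- in a double Gerstenhaber algebra of degree `d`, the
associated bracket induces a graded Lie algebra structure on `(D/[D,D])[d]`. -/
theorem double_gerstenhaber_assoc_bracket_graded_lie_on_quotient
    (bb : D →ₗ[k] D →ₗ[k] D ⊗[k] D)
    (σ : D ⊗[k] D →ₗ[k] D ⊗[k] D)
    (hσ : ∀ (i j : ℤ) (x y : D), x ∈ 𝒜 i → y ∈ 𝒜 j →
      σ (x ⊗ₜ[k] y) = ((-1 : k) ^ (i * j).natAbs) • (y ⊗ₜ[k] x))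
    (cyc3 : D ⊗[k] (D ⊗[k] D) →ₗ[k] D ⊗[k] (D ⊗[k] D))
    (hcyc3 : ∀ (i j l : ℤ) (x y z : D), x ∈ 𝒜 i → y ∈ 𝒜 j → z ∈ 𝒜 l →
      cyc3 (x ⊗ₜ[k] (y ⊗ₜ[k] z)) =
        ((-1 : k) ^ ((i + j) * l).natAbs) • (z ⊗ₜ[k] (x ⊗ₜ[k] y)))
    (hdeg : ∀ (i j : ℤ) (x y : D), x ∈ 𝒜 i → y ∈ 𝒜 j →
      bb x y ∈ Submodule.span k {w : D ⊗[k] D | ∃ p q : ℤ, p + q = i + j + d ∧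
        ∃ u ∈ 𝒜 p, ∃ v ∈ 𝒜 q, w = u ⊗ₜ[k] v})
    (hleib : ∀ (i j : ℤ) (α β : D), α ∈ 𝒜 i → β ∈ 𝒜 j → ∀ γ : D,
      bb α (β * γ) =
        ((-1 : k) ^ ((i + d) * j).natAbs) •
            LinearMap.rTensor D (LinearMap.mulLeft k β) (bb α γ)
          + LinearMap.lTensor D (LinearMap.mulRight k γ) (bb α β))
    (hskew : ∀ (i j : ℤ) (α β : D), α ∈ 𝒜 i → β ∈ 𝒜 j →
      bb α β = - ((-1 : k) ^ ((i + d) * (j + d)).natAbs) • σ (bb β α))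
    (hjac : ∀ (i j l : ℤ) (α β γ : D), α ∈ 𝒜 i → β ∈ 𝒜 j → γ ∈ 𝒜 l →
      brL k D bb α (bb β γ)
        + ((-1 : k) ^ ((i + d) * (j + l)).natAbs) • cyc3 (brL k D bb β (bb γ α))
        + ((-1 : k) ^ ((l + d) * (i + j)).natAbs) •
            cyc3 (cyc3 (brL k D bb γ (bb α β))) = 0) :
    -- well-definedness on the quotient by graded commutators
    (∀ x ∈ gradedComm k D 𝒜, ∀ γ : D,
      LinearMap.mul' k D (bb x γ) ∈ gradedComm k D 𝒜 ∧
      LinearMap.mul' k D (bb γ x) ∈ gradedComm k D 𝒜) ∧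
    -- graded antisymmetry for the `d`-shifted degrees
    (∀ (i j : ℤ) (α β : D), α ∈ 𝒜 i → β ∈ 𝒜 j →
      LinearMap.mul' k D (bb α β)
        + ((-1 : k) ^ ((i + d) * (j + d)).natAbs) • LinearMap.mul' k D (bb β α) ∈
        gradedComm k D 𝒜) ∧
    -- graded Jacobi identity for the `d`-shifted degrees
    (∀ (i j l : ℤ) (α β γ : D), α ∈ 𝒜 i → β ∈ 𝒜 j → γ ∈ 𝒜 l →
      LinearMap.mul' k D (bb α (LinearMap.mul' k D (bb β γ)))
        - LinearMap.mul' k D (bb (LinearMap.mul' k D (bb α β)) γ)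
        - ((-1 : k) ^ ((i + d) * (j + d)).natAbs) •
            LinearMap.mul' k D (bb β (LinearMap.mul' k D (bb α γ))) ∈
        gradedComm k D 𝒜) := by
  have hdeg' : IsGradedOfDegree 𝒜 d (assocBracket bb) := fun i j α β hα hβ =>
    mul'_mem_of_mem_span_homogeneous (hdeg i j α β hα hβ)
  have hder : ∀ i, ∀ α ∈ 𝒜 i, IsGradedDerivation 𝒜 (i + d) (assocBracket bb α) :=
    fun _ _ hα => isGradedDerivation_assocBracket hleib hα
  exact ⟨fun x hx γ => ⟨assocBracket_mem_gradedComm_left hσ hskew hder hdeg' hx γ,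
      assocBracket_mem_gradedComm_right hder hdeg' hx γ⟩,
    fun _ _ _ _ hα hβ => assocBracket_antisymm_mem_gradedComm hσ hskew hα hβ,
    fun _ _ _ _ _ _ hα hβ hγ =>
      assocBracket_jacobi_mem_gradedComm hσ hcyc3 hskew hder hdeg' hjac hα hβ hγ⟩
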